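/- arXiv:1406.7363 — 3 statements merged into one kernel-verified Lean document; each statement's English description precedes it below -/
import Mathlib

section
/- Let A = (Q, Σ, δ, P) be an exact ε-machine. Then for each state p ∈ Q and each length L ≥ 1, the probability of generating a non-reset word of length L from p is upper bounded by R^L_p and lower bounded by MaxR^L_p; that is, MaxR^L_p ≤ Σ_{w : |w| = L, w not a reset word} P_p(w) ≤ R^L_p. -/
open scoped BigOperators ENNReal

attribute [local instance] Classical.propDecidable

variable {Q A : Type*}

/-- Extension of a partial transition function to words. -/
def stepWord (δ : Q → A → Option Q) : Q → List A → Option Q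
  | q, [] => some q
  | q, a :: w => (δ q a).bind fun q' => stepWord δ q' w

/-- Probability of generating a word from a given state. -/
noncomputable def probWord (P : Q → A → ℝ) (δ : Q → A → Option Q) : Q → List A → ℝ
  | _, [] => 1
  | p, a :: w => P p a * ((δ p a).elim 0 fun p' => probWord P δ p' w)

/-- `w` is a reset word: the set of defined images of all states under `w` is a singleton. -/
def IsResetWord (δ : Q → A → Option Q) (w : List A) : Prop :=
  ∃ r : Q, (∃ q : Q, stepWord δ q w = some r) ∧ ∀ q s : Q, stepWord δ q w = some s → s = r

/-- `w` merges the pair `{p, q}` : the set of defined images of `p` and `q` under `w`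
is a singleton. -/
def MergedBy (δ : Q → A → Option Q) (p q : Q) (w : List A) : Prop :=
  ∃ r : Q, (stepWord δ p w = some r ∨ stepWord δ q w = some r) ∧
    (∀ s : Q, stepWord δ p w = some s → s = r) ∧ ∀ s : Q, stepWord δ q w = some s → s = r

/-- A deadlock pair : a pair of distinct states that no word merges. -/
def IsDeadlockPair (δ : Q → A → Option Q) (p q : Q) : Prop :=
  p ≠ q ∧ ∀ w : List A, ¬ MergedBy δ p q w

/-- An ε-machine. -/
structure EpsMachine (Q A : Type*) [Fintype Q] [Fintype A] : Type _ where
  δ : Q → A → Option Q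
  P : Q → A → ℝ
  nonneg : ∀ q a, 0 ≤ P q a
  sum_one : ∀ q : Q, ∑ a : A, P q a = 1
  zero_iff : ∀ q a, P q a = 0 ↔ δ q a = none
  strong_conn : ∀ p q : Q, ∃ w : List A, stepWord δ p w = some q
  card_alpha : 1 < Fintype.card A
  nonequiv : ∀ p q : Q, p ≠ q → ∃ u : List A, probWord P δ p u ≠ probWord P δ q u

/-- An ε-machine is exact if it admits a reset word. -/
def IsExact [Fintype Q] [Fintype A] (M : EpsMachine Q A) : Prop :=
  ∃ w : List A, IsResetWord M.δ w

/-- Transition function of the pair semi-machine `A₂`. -/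
noncomputable def pairStep (δ : Q → A → Option Q) (pq : Q × Q) (a : A) : Option (Q × Q) :=
  match δ pq.1 a, δ pq.2 a with
  | some p', some q' => if p' = q' then none else some (p', q')
  | _, _ => none

/-- Weights of the pair semi-machine `A₂`. -/
noncomputable def pairP (δ : Q → A → Option Q) (P : Q → A → ℝ) (pq : Q × Q) (a : A) : ℝ :=
  if pairStep δ pq a = none then 0 else P pq.1 a

/-- The states of the pair semi-machine : ordered pairs of distinct states. -/
abbrev PairState (Q : Type*) := {pq : Q × Q // pq.1 ≠ pq.2}

variable [Fintype Q] [Fintype A]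

/-- The transition probability matrix `T(A₂)` of the pair semi-machine. -/
noncomputable def pairMatrix (δ : Q → A → Option Q) (P : Q → A → ℝ) :
    Matrix (PairState Q) (PairState Q) ℝ :=
  fun s t => ∑ a : A, if pairStep δ s.val a = some t.val then P s.val.1 a else 0

/-- `R^L_{p,q}` : the sum of the `(p,q)`-th row entries of `T(A₂)^L`. -/
noncomputable def RLrow (δ : Q → A → Option Q) (P : Q → A → ℝ) (L : ℕ) (s : PairState Q) : ℝ :=
  ∑ t : PairState Q, (pairMatrix δ P ^ L) s t

/-- `R^L_p = ∑_{q ≠ p} R^L_{p,q}`. -/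
noncomputable def RLp (δ : Q → A → Option Q) (P : Q → A → ℝ) (L : ℕ) (p : Q) : ℝ :=
  ∑ q : Q, if h : p = q then 0 else RLrow δ P L ⟨(p, q), h⟩

/-- `MaxR^L_p = max_{q ≠ p} R^L_{p,q}`. -/
noncomputable def MaxRLp (δ : Q → A → Option Q) (P : Q → A → ℝ) (L : ℕ) (p : Q) : ℝ :=
  sSup {x : ℝ | ∃ (q : Q) (h : p ≠ q), x = RLrow δ P L ⟨(p, q), h⟩}

/-- `π` is a positive stationary (steady state) probability distribution of the Markov chain
on the machine states with transition probabilities `P(p → q) = ∑_{x : p.x = q} P_p(x)`. -/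
def IsStationaryDist (δ : Q → A → Option Q) (P : Q → A → ℝ) (π : Q → ℝ) : Prop :=
  (∀ q, 0 < π q) ∧ (∑ q : Q, π q = 1) ∧
    ∀ q : Q, π q = ∑ p : Q, π p * ∑ a : A, if δ p a = some q then P p a else 0

/-- `P_π(w) = ∑_q π_q P_q(w)`. -/
noncomputable def Ppi (δ : Q → A → Option Q) (P : Q → A → ℝ) (π : Q → ℝ) (w : List A) : ℝ :=
  ∑ q : Q, π q * probWord P δ q w

/-- `P_π(NSYN_L)` : the probability of generating a non-reset word of length `L`. -/
noncomputable def nsynProb (δ : Q → A → Option Q) (P : Q → A → ℝ) (π : Q → ℝ) (L : ℕ) : ℝ :=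
  ∑ w : Fin L → A, if IsResetWord δ (List.ofFn w) then 0 else Ppi δ P π (List.ofFn w)

/-- The maximum row sum (the `‖·‖₁` norm of a nonnegative matrix). -/
noncomputable def maxRowSum {n : Type*} [Fintype n] (T : Matrix n n ℝ) : ℝ :=
  sSup {x : ℝ | ∃ s : n, x = ∑ t : n, T s t}

/-- The belief distribution `φ(w)` of the observer after the machine generated `w`. -/
noncomputable def belief (δ : Q → A → Option Q) (P : Q → A → ℝ) (π : Q → ℝ)
    (w : List A) (q : Q) : ℝ :=
  (∑ p : Q, if stepWord δ p w = some q then π p * probWord P δ p w else 0) / Ppi δ P π w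

/-- `Q_L(w) = 1 - max_q φ(w)_q` : the combined probability of all states other than the
most likely one. -/
noncomputable def QLw (δ : Q → A → Option Q) (P : Q → A → ℝ) (π : Q → ℝ) (w : List A) : ℝ :=
  1 - sSup (Set.range (belief δ P π w))

/-- `P(Q_L > b^L)`. -/
noncomputable def probQLgt (δ : Q → A → Option Q) (P : Q → A → ℝ) (π : Q → ℝ)
    (b : ℝ) (L : ℕ) : ℝ :=
  ∑ w : Fin L → A, if b ^ L < QLw δ P π (List.ofFn w) then Ppi δ P π (List.ofFn w) else 0

/-- The prediction rate constant `prc(A)` : the infimum of all `a > 0` such that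
`P(Q_L > a^L) → 0` as `L → ∞`. -/
noncomputable def prc (δ : Q → A → Option Q) (P : Q → A → ℝ) (π : Q → ℝ) : ℝ :=
  sInf {a : ℝ | 0 < a ∧
    Filter.Tendsto (fun L : ℕ => probQLgt δ P π a L) Filter.atTop (nhds 0)}

/-- `E(Q_L^{1/L})`. -/
noncomputable def EQL (δ : Q → A → Option Q) (P : Q → A → ℝ) (π : Q → ℝ) (L : ℕ) : ℝ :=
  ∑ w : Fin L → A, Ppi δ P π (List.ofFn w) * QLw δ P π (List.ofFn w) ^ ((L : ℝ)⁻¹)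

/-- `E(1/Q_L^{1/L})`, computed in the extended reals (with `1/0 = ∞`). -/
noncomputable def EinvQL (δ : Q → A → Option Q) (P : Q → A → ℝ) (π : Q → ℝ) (L : ℕ) : ℝ≥0∞ :=
  ∑ w : Fin L → A, ENNReal.ofReal (Ppi δ P π (List.ofFn w)) *
    (ENNReal.ofReal (QLw δ P π (List.ofFn w)))⁻¹ ^ ((L : ℝ)⁻¹)

/-- A deadlock component : a nonempty, strongly connected set of deadlock pairs closed
under the action of all letters. -/
def IsDeadlockComponent (δ : Q → A → Option Q) (S : Set (Q × Q)) : Prop :=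
  S.Nonempty ∧ (∀ pq ∈ S, IsDeadlockPair δ pq.1 pq.2) ∧
    (∀ pq ∈ S, ∀ a : A, ∀ r : Q × Q, pairStep δ pq a = some r → r ∈ S) ∧
    ∀ pq ∈ S, ∀ rs ∈ S, ∃ w : List A, stepWord (pairStep δ) pq w = some rs

/-- The states of the edge machine `M_edge` of a component `S` of the pair semi-machine :
pairs `(x, k)` with `k ∈ S` and `P_k(x) > 0`. -/
abbrev EdgeState (δ : Q → A → Option Q) (P : Q → A → ℝ) (S : Set (Q × Q)) :=
  {e : A × (Q × Q) // e.2 ∈ S ∧ 0 < pairP δ P e.2 e.1}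

/-- `ρ` is a stationary (equilibrium) distribution of the edge machine `M_edge`,
whose transition probabilities are `P((x,k) → (y,j)) = P_j(y)·I(x,k,j)`. -/
def IsEdgeStationary (δ : Q → A → Option Q) (P : Q → A → ℝ) (S : Set (Q × Q))
    (ρ : EdgeState δ P S → ℝ) : Prop :=
  (∀ r, 0 ≤ ρ r) ∧ (∑ r : EdgeState δ P S, ρ r = 1) ∧
    ∀ t : EdgeState δ P S, ρ t = ∑ s : EdgeState δ P S, ρ s *
      (if pairStep δ s.val.2 s.val.1 = some t.val.2 then pairP δ P t.val.2 t.val.1 else 0)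

/-- `E_M = ∑_r ρ_r F(r)` where `F((x,(p,q))) = ln (P_p(x) / P_q(x))`. -/
noncomputable def EMval (δ : Q → A → Option Q) (P : Q → A → ℝ) (S : Set (Q × Q))
    (ρ : EdgeState δ P S → ℝ) : ℝ :=
  ∑ r : EdgeState δ P S, ρ r * Real.log (P r.val.2.1 r.val.1 / P r.val.2.2 r.val.1)

/-! `(T(A₂)^L)_{s,t}` is the probability, from the first state of `s`, of the words of length `L`
that drive the pair `s` to `t` without merging or killing it. Hence `R^L_{p,q}` is the probability,
from `p`, of the words of length `L` sending `p` and `q` to two defined, distinct states. Such a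
word is not a reset word, which gives the lower bound; conversely, a non-reset word that `p` can
generate is defined on `p` and sends some `q` to a defined state other than `p.w`, which gives the
upper bound. -/

theorem stepWord_cons {Q A : Type*} (δ : Q → A → Option Q) (p : Q) (a : A) (w : List A) :
    stepWord δ p (a :: w) = (δ p a).bind fun p' => stepWord δ p' w := rfl

theorem probWord_cons {Q A : Type*} (P : Q → A → ℝ) (δ : Q → A → Option Q) (p : Q) (a : A)
    (w : List A) :
    probWord P δ p (a :: w) = P p a * (δ p a).elim 0 fun p' => probWord P δ p' w := rfl

theorem probWord_nonneg {Q A : Type*} {P : Q → A → ℝ} (δ : Q → A → Option Q)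
    (hP : ∀ q a, 0 ≤ P q a) (p : Q) (w : List A) : 0 ≤ probWord P δ p w := by
  induction w generalizing p with
  | nil => simp [probWord]
  | cons a w ih =>
    rw [probWord_cons]
    cases δ p a with
    | none => simp
    | some p' => exact mul_nonneg (hP p a) (ih p')

theorem exists_stepWord_eq_some_of_probWord_ne_zero {Q A : Type*} {P : Q → A → ℝ}
    {δ : Q → A → Option Q} {p : Q} {w : List A} (h : probWord P δ p w ≠ 0) :
    ∃ r, stepWord δ p w = some r := by
  induction w generalizing p with
  | nil => exact ⟨p, rfl⟩
  | cons a w ih =>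
    rw [probWord_cons] at h
    cases hpa : δ p a with
    | none => simp [hpa] at h
    | some p' =>
      rw [hpa] at h
      simpa [stepWord_cons, hpa] using ih (right_ne_zero_of_mul h)

def KeepsDistinct {Q A : Type*} (δ : Q → A → Option Q) (p q : Q) (w : List A) : Prop :=
  ∃ a b, stepWord δ p w = some a ∧ stepWord δ q w = some b ∧ a ≠ b

theorem KeepsDistinct.ne {Q A : Type*} {δ : Q → A → Option Q} {p q : Q} {w : List A}
    (h : KeepsDistinct δ p q w) : p ≠ q := by
  rintro rfl
  obtain ⟨a, b, ha, hb, hab⟩ := h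
  exact hab (Option.some_injective _ (ha.symm.trans hb))

theorem keepsDistinct_nil {Q A : Type*} {δ : Q → A → Option Q} {p q : Q} :
    KeepsDistinct δ p q [] ↔ p ≠ q := by
  simp [KeepsDistinct, stepWord]

theorem keepsDistinct_cons {Q A : Type*} {δ : Q → A → Option Q} {p q p' q' : Q} {a : A}
    {w : List A} (hp : δ p a = some p') (hq : δ q a = some q') :
    KeepsDistinct δ p q (a :: w) ↔ KeepsDistinct δ p' q' w := by
  simp [KeepsDistinct, stepWord_cons, hp, hq]

theorem not_keepsDistinct_cons_of_eq_none {Q A : Type*} {δ : Q → A → Option Q} {p q : Q}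
    {a : A} {w : List A} (h : δ p a = none ∨ δ q a = none) :
    ¬ KeepsDistinct δ p q (a :: w) := by
  rintro ⟨a, b, ha, hb, -⟩
  rcases h with h | h <;> simp [stepWord_cons, h] at ha hb

theorem KeepsDistinct.not_isResetWord {Q A : Type*} {δ : Q → A → Option Q} {p q : Q}
    {w : List A} (h : KeepsDistinct δ p q w) : ¬ IsResetWord δ w := by
  rintro ⟨r, -, hr⟩
  obtain ⟨a, b, ha, hb, hab⟩ := h
  exact hab ((hr p a ha).trans (hr q b hb).symm)

theorem exists_keepsDistinct_of_not_isResetWord {Q A : Type*} {δ : Q → A → Option Q} {p r : Q}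
    {w : List A} (hw : ¬ IsResetWord δ w) (hp : stepWord δ p w = some r) :
    ∃ q, KeepsDistinct δ p q w := by
  by_contra! h
  exact hw ⟨r, ⟨p, hp⟩, fun q s hs => by_contra fun hsr => h q ⟨r, s, hp, hs, Ne.symm hsr⟩⟩

noncomputable def transMatrix {S A : Type*} [Fintype A] (step : S → A → Option S)
    (wt : S → A → ℝ) : Matrix S S ℝ :=
  fun s t => ∑ a : A, if step s a = some t then wt s a else 0

theorem sum_ofFn_succ {A M : Type*} [Fintype A] [AddCommMonoid M] (L : ℕ) (F : List A → M) :
    ∑ w : Fin (L + 1) → A, F (List.ofFn w) = ∑ a : A, ∑ w : Fin L → A, F (a :: List.ofFn w) := by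
  rw [← (Fin.consEquiv fun _ : Fin (L + 1) => A).sum_comp, Fintype.sum_prod_type]
  simp [Fin.consEquiv, List.ofFn_succ]

theorem sum_transMatrix_pow_apply {S A : Type*} [Fintype S] [DecidableEq S] [Fintype A]
    (step : S → A → Option S) (wt : S → A → ℝ) (L : ℕ) (s : S) :
    ∑ t, (transMatrix step wt ^ L) s t = ∑ w : Fin L → A, probWord wt step s (List.ofFn w) := by
  induction L generalizing s with
  | zero => simp [Matrix.one_apply, probWord]
  | succ L ih =>
    calc ∑ t, (transMatrix step wt ^ (L + 1)) s t
        = ∑ u, transMatrix step wt s u * ∑ t, (transMatrix step wt ^ L) u t := by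
          simp only [pow_succ', Matrix.mul_apply, Finset.mul_sum]
          exact Finset.sum_comm
      _ = ∑ a, wt s a * (step s a).elim 0 fun u => ∑ t, (transMatrix step wt ^ L) u t := by
          simp only [transMatrix, Finset.sum_mul, ite_mul, zero_mul]
          rw [Finset.sum_comm]
          refine Finset.sum_congr rfl fun a _ => ?_
          cases step s a <;> simp
      _ = ∑ w : Fin (L + 1) → A, probWord wt step s (List.ofFn w) := by
          rw [sum_ofFn_succ]
          refine Finset.sum_congr rfl fun a _ => ?_
          cases h : step s a <;> simp [probWord_cons, h, ih, Finset.mul_sum]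

/-- The pair semi-machine `A₂` as a partial automaton on `PairState Q`. -/
noncomputable def pairStepSub {Q A : Type*} (δ : Q → A → Option Q) (s : PairState Q) (a : A) :
    Option (PairState Q) :=
  (pairStep δ s.val a).bind fun u => if h : u.1 = u.2 then none else some ⟨u, h⟩

theorem pairStepSub_eq_some_iff {Q A : Type*} {δ : Q → A → Option Q} {s t : PairState Q}
    {a : A} : pairStepSub δ s a = some t ↔ pairStep δ s.val a = some t.val := by
  obtain ⟨t, ht⟩ := t
  cases h : pairStep δ s.val a with
  | none => simp [pairStepSub, h]
  | some u =>
    by_cases hu : u.1 = u.2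
    · simp only [pairStepSub, h, Option.bind_some, hu, ↓reduceDIte, reduceCtorEq,
        Option.some.injEq, false_iff]
      rintro rfl
      exact ht hu
    · simp [pairStepSub, h, hu]

theorem pairMatrix_eq_transMatrix {Q A : Type*} [Fintype A] (δ : Q → A → Option Q)
    (P : Q → A → ℝ) : pairMatrix δ P = transMatrix (pairStepSub δ) fun s a => P s.val.1 a := by
  ext s t
  simp only [pairMatrix, transMatrix, pairStepSub_eq_some_iff]

theorem probWord_pairStepSub {Q A : Type*} (δ : Q → A → Option Q) (P : Q → A → ℝ)
    (s : PairState Q) (w : List A) :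
    probWord (fun s a => P s.val.1 a) (pairStepSub δ) s w =
      if KeepsDistinct δ s.val.1 s.val.2 w then probWord P δ s.val.1 w else 0 := by
  induction w generalizing s with
  | nil => simp [probWord, keepsDistinct_nil.mpr s.prop]
  | cons a w ih =>
    obtain ⟨⟨p, q⟩, hpq⟩ := s
    rw [probWord_cons, probWord_cons]
    cases hp : δ p a with
    | none =>
      simp [pairStepSub, pairStep, hp, not_keepsDistinct_cons_of_eq_none (Or.inl hp)]
    | some p' =>
      cases hq : δ q a with
      | none =>
        simp [pairStepSub, pairStep, hp, hq, not_keepsDistinct_cons_of_eq_none (Or.inr hq)]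
      | some q' =>
        rw [keepsDistinct_cons hp hq]
        by_cases hpq' : p' = q'
        · subst hpq'
          have : ¬ KeepsDistinct δ p' p' w := fun h => h.ne rfl
          simp [pairStepSub, pairStep, hp, hq, this]
        · simp [pairStepSub, pairStep, hp, hq, hpq', ih ⟨(p', q'), hpq'⟩, mul_ite]

theorem RLrow_eq_sum_keepsDistinct {Q A : Type*} [Fintype Q] [Fintype A]
    (δ : Q → A → Option Q) (P : Q → A → ℝ) (L : ℕ) (s : PairState Q) :
    RLrow δ P L s = ∑ w : Fin L → A,
      if KeepsDistinct δ s.val.1 s.val.2 (List.ofFn w) then probWord P δ s.val.1 (List.ofFn w)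
      else 0 := by
  simp only [RLrow, pairMatrix_eq_transMatrix, sum_transMatrix_pow_apply, probWord_pairStepSub]

section Bounds

variable {Q A : Type*} [Fintype A] {δ : Q → A → Option Q} {P : Q → A → ℝ}

noncomputable def nonResetProb (δ : Q → A → Option Q) (P : Q → A → ℝ) (L : ℕ) (p : Q) : ℝ :=
  ∑ w : Fin L → A, if IsResetWord δ (List.ofFn w) then 0 else probWord P δ p (List.ofFn w)

theorem nonResetProb_nonneg (hP : ∀ q a, 0 ≤ P q a) (L : ℕ) (p : Q) :
    0 ≤ nonResetProb δ P L p :=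
  Finset.sum_nonneg fun _ _ => by split_ifs <;> simp [probWord_nonneg δ hP]

variable [Fintype Q]

theorem RLrow_le_nonResetProb (hP : ∀ q a, 0 ≤ P q a) (L : ℕ) (s : PairState Q) :
    RLrow δ P L s ≤ nonResetProb δ P L s.val.1 := by
  rw [RLrow_eq_sum_keepsDistinct]
  refine Finset.sum_le_sum fun w _ => ?_
  by_cases h : KeepsDistinct δ s.val.1 s.val.2 (List.ofFn w)
  · simp [h, h.not_isResetWord]
  · split_ifs <;> simp [probWord_nonneg δ hP]

theorem MaxRLp_le_nonResetProb (hP : ∀ q a, 0 ≤ P q a) (L : ℕ) (p : Q) :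
    MaxRLp δ P L p ≤ nonResetProb δ P L p :=
  Real.sSup_le (by rintro x ⟨q, hq, rfl⟩; exact RLrow_le_nonResetProb hP L _)
    (nonResetProb_nonneg hP L p)

theorem RLp_eq_sum_keepsDistinct (L : ℕ) (p : Q) :
    RLp δ P L p = ∑ w : Fin L → A, ∑ q : Q,
      if KeepsDistinct δ p q (List.ofFn w) then probWord P δ p (List.ofFn w) else 0 := by
  rw [RLp, Finset.sum_comm]
  refine Finset.sum_congr rfl fun q _ => ?_
  by_cases hpq : p = q
  · subst hpq
    have : ∀ w : List A, ¬ KeepsDistinct δ p p w := fun w h => h.ne rfl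
    simp [this]
  · simp [hpq, RLrow_eq_sum_keepsDistinct]

theorem nonResetProb_le_RLp (hP : ∀ q a, 0 ≤ P q a) (L : ℕ) (p : Q) :
    nonResetProb δ P L p ≤ RLp δ P L p := by
  rw [RLp_eq_sum_keepsDistinct]
  refine Finset.sum_le_sum fun w _ => ?_
  have hterm_nonneg : ∀ q, 0 ≤ if KeepsDistinct δ p q (List.ofFn w)
      then probWord P δ p (List.ofFn w) else 0 := fun q => by
    split_ifs <;> simp [probWord_nonneg δ hP]
  by_cases hw : IsResetWord δ (List.ofFn w)
  · rw [if_pos hw]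
    exact Finset.sum_nonneg fun q _ => hterm_nonneg q
  rw [if_neg hw]
  by_cases h0 : probWord P δ p (List.ofFn w) = 0
  · simp [h0]
  obtain ⟨r, hr⟩ := exists_stepWord_eq_some_of_probWord_ne_zero h0
  obtain ⟨q, hq⟩ := exists_keepsDistinct_of_not_isResetWord hw hr
  calc probWord P δ p (List.ofFn w)
      = if KeepsDistinct δ p q (List.ofFn w) then probWord P δ p (List.ofFn w) else 0 :=
        (if_pos hq).symm
    _ ≤ _ := Finset.single_le_sum (fun q _ => hterm_nonneg q) (Finset.mem_univ q)

end Bounds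

theorem stmt0_general {Q A : Type*} [Fintype Q] [Fintype A] (M : EpsMachine Q A)
    (p : Q) (L : ℕ) :
    MaxRLp M.δ M.P L p ≤
        (∑ w : Fin L → A,
          if IsResetWord M.δ (List.ofFn w) then 0 else probWord M.P M.δ p (List.ofFn w)) ∧
      (∑ w : Fin L → A,
          if IsResetWord M.δ (List.ofFn w) then 0 else probWord M.P M.δ p (List.ofFn w)) ≤
        RLp M.δ M.P L p :=
  ⟨MaxRLp_le_nonResetProb M.nonneg L p, nonResetProb_le_RLp M.nonneg L p⟩

/-- Theorem 1: for an exact ε-machine, for each state `p` and each `L ≥ 1`,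
the probability of generating a non-reset word of length `L` from `p` is upper bounded by
`R^L_p` and lower bounded by `MaxR^L_p`. -/
theorem stmt0 {Q A : Type*} [Fintype Q] [Fintype A] (M : EpsMachine Q A)
    (hexact : IsExact M) (p : Q) (L : ℕ) (hL : 1 ≤ L) :
    MaxRLp M.δ M.P L p ≤
        (∑ w : Fin L → A,
          if IsResetWord M.δ (List.ofFn w) then 0 else probWord M.P M.δ p (List.ofFn w)) ∧
      (∑ w : Fin L → A,
          if IsResetWord M.δ (List.ofFn w) then 0 else probWord M.P M.δ p (List.ofFn w)) ≤
        RLp M.δ M.P L p :=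
  stmt0_general M p L
end

section
/- Let (Q, Σ, δ) be a strongly connected partial DFA. If for every pair of distinct states p, q ∈ Q there exists a word w ∈ Σ* with |{p,q}.w| = 1, then (Q, Σ, δ) is synchronizing, i.e. there exists a word w with |Q.w| = 1. Equivalently, a strongly connected partial DFA fails to be synchronizing if and only if it has a deadlock pair. -/
open scoped BigOperators ENNReal

attribute [local instance] Classical.propDecidable

variable {Q A : Type*}

variable [Fintype Q] [Fintype A]

/-- `π` is a positive stationary (steady state) probability distribution of the Markov chain
on the machine states with transition probabilities `P(p → q) = ∑_{x : p.x = q} P_p(x)`. -/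
def IsStationaryDistrib (δ : Q → A → Option Q) (P : Q → A → ℝ) (π : Q → ℝ) : Prop :=
  (∀ q, 0 < π q) ∧ (∑ q : Q, π q = 1) ∧
    ∀ q : Q, π q = ∑ p : Q, π p * ∑ a : A, if δ p a = some q then P p a else 0

/-!
Merging two distinct states of a nonempty image `S.w` by a further word strictly shrinks the
image and keeps it nonempty, so when every pair is mergeable, iterating from `S = Q` ends in a
singleton image, i.e. at a reset word.
-/

section WordImage

variable {Q A : Type*} (δ : Q → A → Option Q)

lemma stepWord_append (p : Q) (u v : List A) :
    stepWord δ p (u ++ v) = (stepWord δ p u).bind fun q => stepWord δ q v := by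
  induction u generalizing p with
  | nil => rfl
  | cons a u ih => simp only [List.cons_append, stepWord, ih, Option.bind_assoc]

/-- The paper's `S.w`. -/
noncomputable def wordImage (S : Finset Q) (w : List A) : Finset Q :=
  S.biUnion fun q => (stepWord δ q w).toFinset

lemma wordImage_mono {S T : Finset Q} (h : S ⊆ T) (w : List A) :
    wordImage δ S w ⊆ wordImage δ T w :=
  Finset.biUnion_subset_biUnion_of_subset_left _ h

variable {δ}

@[simp]
lemma mem_wordImage {S : Finset Q} {w : List A} {r : Q} :
    r ∈ wordImage δ S w ↔ ∃ q ∈ S, stepWord δ q w = some r := by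
  simp [wordImage]

lemma wordImage_append (S : Finset Q) (u v : List A) :
    wordImage δ S (u ++ v) = wordImage δ (wordImage δ S u) v := by
  ext r
  simp only [mem_wordImage, stepWord_append, Option.bind_eq_some_iff]
  grind

lemma wordImage_union (S T : Finset Q) (w : List A) :
    wordImage δ (S ∪ T) w = wordImage δ S w ∪ wordImage δ T w :=
  Finset.union_biUnion

lemma card_wordImage_le (S : Finset Q) (w : List A) : (wordImage δ S w).card ≤ S.card :=
  (Finset.card_biUnion_le_card_mul S _ 1 fun q _ => by
    cases stepWord δ q w <;> simp).trans_eq (mul_one _)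

lemma card_wordImage_eq_one_iff {S : Finset Q} {w : List A} :
    (wordImage δ S w).card = 1 ↔
      ∃ r, (∃ q ∈ S, stepWord δ q w = some r) ∧ ∀ q ∈ S, ∀ s, stepWord δ q w = some s → s = r := by
  simp only [Finset.card_eq_one, Finset.eq_singleton_iff_unique_mem, mem_wordImage]
  exact exists_congr fun r => and_congr_right fun _ =>
    ⟨fun h q hq s hs => h s ⟨q, hq, hs⟩, fun h s ⟨q, hq, hs⟩ => h q hq s hs⟩

lemma isResetWord_iff_card_wordImage [Fintype Q] {w : List A} :
    IsResetWord δ w ↔ (wordImage δ Finset.univ w).card = 1 := by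
  simp [card_wordImage_eq_one_iff, IsResetWord]

lemma mergedBy_iff_card_wordImage {p q : Q} {w : List A} :
    MergedBy δ p q w ↔ (wordImage δ {p, q} w).card = 1 := by
  simp only [card_wordImage_eq_one_iff, MergedBy]
  grind

lemma card_wordImage_lt_of_mergedBy {S : Finset Q} {p q : Q} {u : List A}
    (hp : p ∈ S) (hq : q ∈ S) (hpq : p ≠ q) (hu : MergedBy δ p q u) :
    (wordImage δ S u).Nonempty ∧ (wordImage δ S u).card < S.card := by
  rw [mergedBy_iff_card_wordImage] at hu
  have hsub : {p, q} ⊆ S := Finset.insert_subset hp (Finset.singleton_subset_iff.mpr hq)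
  have hpair : ({p, q} : Finset Q).card = 2 := Finset.card_pair hpq
  have hS := Finset.card_le_card hsub
  refine ⟨Finset.card_pos.mp ?_, ?_⟩
  · have := Finset.card_le_card (wordImage_mono δ hsub u)
    omega
  calc (wordImage δ S u).card
      = (wordImage δ {p, q} u ∪ wordImage δ (S \ {p, q}) u).card := by
        rw [← wordImage_union, Finset.union_sdiff_of_subset hsub]
    _ ≤ (wordImage δ {p, q} u).card + (wordImage δ (S \ {p, q}) u).card :=
        Finset.card_union_le _ _
    _ ≤ 1 + (S \ {p, q}).card := by
        rw [hu]
        exact Nat.add_le_add_left (card_wordImage_le _ _) 1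
    _ < S.card := by
        rw [Finset.card_sdiff_of_subset hsub]
        omega

lemma exists_card_wordImage_eq_one (hmerge : ∀ p q : Q, p ≠ q → ∃ w : List A, MergedBy δ p q w)
    {S : Finset Q} (hS : S.Nonempty) : ∃ w : List A, (wordImage δ S w).card = 1 := by
  induction h : S.card using Nat.strong_induction_on generalizing S with
  | _ n ih =>
    obtain hle | hlt := le_or_gt S.card 1
    · exact ⟨[], by simpa [wordImage, stepWord] using le_antisymm hle hS.card_pos⟩
    obtain ⟨p, hp, q, hq, hpq⟩ := Finset.one_lt_card.mp hlt
    obtain ⟨u, hu⟩ := hmerge p q hpq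
    obtain ⟨hne, hcard⟩ := card_wordImage_lt_of_mergedBy hp hq hpq hu
    obtain ⟨v, hv⟩ := ih _ (h ▸ hcard) hne rfl
    exact ⟨u ++ v, by rwa [wordImage_append]⟩

lemma exists_isResetWord_of_forall_mergedBy [Fintype Q] [Nonempty Q]
    (hmerge : ∀ p q : Q, p ≠ q → ∃ w : List A, MergedBy δ p q w) :
    ∃ w : List A, IsResetWord δ w := by
  simpa only [isResetWord_iff_card_wordImage] using
    exists_card_wordImage_eq_one hmerge Finset.univ_nonempty

/-- Route `p` into the image of a reset word first; the reset word then merges the pair. -/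
lemma not_isDeadlockPair_of_isResetWord [Fintype Q]
    (hsc : ∀ p q : Q, ∃ w : List A, stepWord δ p w = some q) {w : List A}
    (hw : IsResetWord δ w) (p q : Q) : ¬ IsDeadlockPair δ p q := by
  rintro ⟨-, hdead⟩
  rw [isResetWord_iff_card_wordImage] at hw
  obtain ⟨r, ⟨q₀, -, hq₀⟩, -⟩ := card_wordImage_eq_one_iff.mp hw
  obtain ⟨u, hu⟩ := hsc p q₀
  apply hdead (u ++ w)
  rw [mergedBy_iff_card_wordImage, wordImage_append]
  have hsub := wordImage_mono δ (Finset.subset_univ (wordImage δ {p, q} u)) w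
  have hr : r ∈ wordImage δ (wordImage δ {p, q} u) w :=
    mem_wordImage.mpr ⟨q₀, mem_wordImage.mpr ⟨p, by simp, hu⟩, hq₀⟩
  exact le_antisymm (hw ▸ Finset.card_le_card hsub) (Finset.card_pos.mpr ⟨r, hr⟩)

end WordImage

theorem stmt5_general {Q A : Type*} [Fintype Q] [Nonempty Q] (δ : Q → A → Option Q)
    (hsc : ∀ p q : Q, ∃ w : List A, stepWord δ p w = some q) :
    ((∀ p q : Q, p ≠ q → ∃ w : List A, MergedBy δ p q w) → ∃ w : List A, IsResetWord δ w) ∧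
      (¬ (∃ w : List A, IsResetWord δ w) ↔ ∃ p q : Q, IsDeadlockPair δ p q) := by
  refine ⟨exists_isResetWord_of_forall_mergedBy, fun hnot => ?_, ?_⟩
  · by_contra! hnone
    exact hnot (exists_isResetWord_of_forall_mergedBy fun p q hpq => by
      simpa [IsDeadlockPair, hpq] using hnone p q)
  · rintro ⟨p, q, hdead⟩ ⟨w, hw⟩
    exact not_isDeadlockPair_of_isResetWord hsc hw p q hdead

/-- a strongly connected partial DFA in which every pair of distinct states
can be merged by some word is synchronizing; equivalently, a strongly connected partial DFA
fails to be synchronizing if and only if it has a deadlock pair. -/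
theorem stmt5 {Q A : Type*} [Fintype Q] [Fintype A] [Nonempty Q] (δ : Q → A → Option Q)
    (hsc : ∀ p q : Q, ∃ w : List A, stepWord δ p w = some q) :
    ((∀ p q : Q, p ≠ q → ∃ w : List A, MergedBy δ p q w) → ∃ w : List A, IsResetWord δ w) ∧
      (¬ (∃ w : List A, IsResetWord δ w) ↔ ∃ p q : Q, IsDeadlockPair δ p q) :=
  stmt5_general δ hsc
end

section
/- Let A = (Q, Σ, δ, P) be a non-exact ε-machine. Then E_M > 0 for each deadlock component M of the pair semi-machine A₂. -/
open scoped BigOperators ENNReal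

attribute [local instance] Classical.propDecidable

variable {Q A : Type*}

variable [Fintype Q] [Fintype A]

/-! By stationarity of the edge machine, `ρ (x, j) = W j * P_{j.1}(x)`, where `W j`
(`edgeInflow`) is the `ρ`-mass flowing into the pair `j`. The two states of a deadlock pair emit
the same letters, so `∑ ρ (x, (p, q)) * P_q(x) / P_p(x) = ∑ W = ∑ ρ`, and `log t ≥ 1 - 1/t` gives
`E_M ≥ 0`, with equality only if `P_p(x) = P_q(x)` on every edge of positive weight. In that case
the pairs of positive inflow form a letter-closed set on whose pairs both states emit every word
with the same probability, contradicting the non-equivalence of distinct states. -/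

open Finset

section Deadlock

variable {Q A : Type*} {δ : Q → A → Option Q} {p q : Q}

theorem IsDeadlockPair.symm (hd : IsDeadlockPair δ p q) : IsDeadlockPair δ q p :=
  ⟨hd.1.symm, fun w ⟨r, h, hp, hq⟩ => hd.2 w ⟨r, h.symm, hq, hp⟩⟩

theorem IsDeadlockPair.exists_step (hd : IsDeadlockPair δ p q) {a : A} {p' : Q}
    (hp : δ p a = some p') : ∃ q', δ q a = some q' ∧ p' ≠ q' := by
  have hp' : ∀ s, stepWord δ p [a] = some s → s = p' := by simp [stepWord, hp, eq_comm]
  have hpa : stepWord δ p [a] = some p' := by simp [stepWord, hp]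
  rcases hq : δ q a with _ | q'
  · exact absurd ⟨p', Or.inl hpa, hp', by simp [stepWord, hq]⟩ (hd.2 [a])
  · refine ⟨q', rfl, fun he => hd.2 [a] ⟨p', Or.inl hpa, hp', ?_⟩⟩
    simp [stepWord, hq, he, eq_comm]

theorem IsDeadlockPair.exists_pairStep {j : Q × Q} (hd : IsDeadlockPair δ j.1 j.2) {a : A}
    (ha : δ j.1 a ≠ none) :
    ∃ j', pairStep δ j a = some j' ∧ δ j.1 a = some j'.1 ∧ δ j.2 a = some j'.2 := by
  obtain ⟨p', hp⟩ := Option.ne_none_iff_exists'.mp ha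
  obtain ⟨q', hq, hne⟩ := hd.exists_step hp
  exact ⟨(p', q'), by simp [pairStep, hp, hq, hne], hp, hq⟩

end Deadlock

theorem probWord_eq_of_closed {Q A : Type*} (P : Q → A → ℝ) (δ : Q → A → Option Q)
    (T : Set (Q × Q)) (hP : ∀ j ∈ T, P j.1 = P j.2)
    (hstep : ∀ j ∈ T, ∀ a, P j.1 a ≠ 0 → ∃ j' ∈ T, δ j.1 a = some j'.1 ∧ δ j.2 a = some j'.2)
    {j : Q × Q} (hj : j ∈ T) (u : List A) : probWord P δ j.1 u = probWord P δ j.2 u := by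
  induction u generalizing j with
  | nil => rfl
  | cons a u ih =>
    by_cases ha : P j.1 a = 0
    · simp [probWord, ha, ← hP j hj]
    · obtain ⟨j', hj', h1, h2⟩ := hstep j hj a ha
      simp only [probWord, h1, h2, Option.elim_some, hP j hj, ih hj']

theorem sum_mul_log_div_pos {ι : Type*} [Fintype ι] {w x y : ι → ℝ} (hw : ∀ i, 0 ≤ w i)
    (hx : ∀ i, 0 < x i) (hy : ∀ i, 0 < y i) (hsum : ∑ i, w i * (y i / x i) = ∑ i, w i)
    (hne : ∃ i, 0 < w i ∧ x i ≠ y i) : 0 < ∑ i, w i * Real.log (x i / y i) := by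
  have hterm : ∀ i, w i * (1 - y i / x i) ≤ w i * Real.log (x i / y i) := fun i => by
    have := Real.one_sub_inv_le_log_of_pos (div_pos (hx i) (hy i))
    rw [inv_div] at this
    exact mul_le_mul_of_nonneg_left this (hw i)
  obtain ⟨i, hwi, hxy⟩ := hne
  have hstrict : w i * (1 - y i / x i) < w i * Real.log (x i / y i) := by
    have := Real.log_lt_sub_one_of_pos (div_pos (hy i) (hx i)) (div_ne_one_of_ne hxy.symm)
    rw [← inv_div (x i), Real.log_inv, inv_div] at this
    exact mul_lt_mul_of_pos_left (by linarith) hwi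
  calc 0 = ∑ i, w i * (1 - y i / x i) := by
        simp only [mul_sub, mul_one, sum_sub_distrib, hsum, sub_self]
    _ < _ := sum_lt_sum (fun i _ => hterm i) ⟨i, mem_univ i, hstrict⟩

section EdgeMachine

variable {Q A : Type*} [Fintype Q] [Fintype A]

namespace EpsMachine

variable (M : EpsMachine Q A) {p q : Q}

theorem pos_iff_ne_none (q : Q) (a : A) : 0 < M.P q a ↔ M.δ q a ≠ none :=
  (M.nonneg q a).lt_iff_ne'.trans (M.zero_iff q a).not

theorem pos_of_deadlock (hd : IsDeadlockPair M.δ p q) {a : A} (ha : 0 < M.P p a) :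
    0 < M.P q a := by
  obtain ⟨p', hp⟩ := Option.ne_none_iff_exists'.mp ((M.pos_iff_ne_none p a).mp ha)
  obtain ⟨q', hq, -⟩ := hd.exists_step hp
  exact (M.pos_iff_ne_none q a).mpr (by simp [hq])

theorem eq_zero_of_deadlock (hd : IsDeadlockPair M.δ p q) {a : A} (ha : M.P p a = 0) :
    M.P q a = 0 := by
  by_contra h
  exact (M.pos_of_deadlock hd.symm ((M.nonneg q a).lt_of_ne' h)).ne' ha

theorem pairP_eq_of_deadlock {j : Q × Q} (hd : IsDeadlockPair M.δ j.1 j.2) (a : A) :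
    pairP M.δ M.P j a = M.P j.1 a := by
  by_cases ha : M.P j.1 a = 0
  · simp [pairP, ha]
  · obtain ⟨j', hj', -⟩ := hd.exists_pairStep ((M.zero_iff _ _).not.mp ha)
    simp [pairP, hj']

end EpsMachine

variable {M : EpsMachine Q A} {S : Set (Q × Q)}

theorem EdgeState.fst_pos (hS : ∀ j ∈ S, IsDeadlockPair M.δ j.1 j.2)
    (t : EdgeState M.δ M.P S) : 0 < M.P t.val.2.1 t.val.1 :=
  M.pairP_eq_of_deadlock (hS _ t.prop.1) _ ▸ t.prop.2

theorem EdgeState.snd_pos (hS : ∀ j ∈ S, IsDeadlockPair M.δ j.1 j.2)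
    (t : EdgeState M.δ M.P S) : 0 < M.P t.val.2.2 t.val.1 :=
  M.pos_of_deadlock (hS _ t.prop.1) (fst_pos hS t)

theorem sum_edgeState_eq (hS : ∀ j ∈ S, IsDeadlockPair M.δ j.1 j.2)
    (F : A × (Q × Q) → ℝ) (hF : ∀ j ∈ S, ∀ a, M.P j.1 a = 0 → F (a, j) = 0) :
    ∑ t : EdgeState M.δ M.P S, F t.val = ∑ j, if j ∈ S then ∑ a, F (a, j) else 0 := by
  rw [← sum_subtype _ (fun _ => mem_filter_univ _) F, sum_filter, Fintype.sum_prod_type_right]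
  refine sum_congr rfl fun j _ => ?_
  split_ifs with hj
  · refine sum_congr rfl fun a _ => ?_
    rw [M.pairP_eq_of_deadlock (hS j hj)]
    by_cases ha : 0 < M.P j.1 a
    · simp [hj, ha]
    · simp [hj, ha, hF j hj a (le_antisymm (not_lt.mp ha) (M.nonneg _ _))]
  · simp [hj]

noncomputable def edgeInflow (δ : Q → A → Option Q) (P : Q → A → ℝ) (S : Set (Q × Q))
    (ρ : EdgeState δ P S → ℝ) (j : Q × Q) : ℝ :=
  ∑ s : EdgeState δ P S, if pairStep δ s.val.2 s.val.1 = some j then ρ s else 0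

namespace IsEdgeStationary

variable {δ : Q → A → Option Q} {P : Q → A → ℝ} {ρ : EdgeState δ P S → ℝ}

theorem le_edgeInflow (hρ : IsEdgeStationary δ P S ρ) {s : EdgeState δ P S} {j : Q × Q}
    (hs : pairStep δ s.val.2 s.val.1 = some j) : ρ s ≤ edgeInflow δ P S ρ j := by
  have hnonneg : ∀ r ∈ univ, 0 ≤ if pairStep δ r.val.2 r.val.1 = some j then ρ r else 0 :=
    fun r _ => by split_ifs <;> simp [hρ.1 r]
  rw [edgeInflow]
  simpa [hs] using single_le_sum hnonneg (mem_univ s)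

theorem eq_edgeInflow_mul (hρ : IsEdgeStationary δ P S ρ) (t : EdgeState δ P S) :
    ρ t = edgeInflow δ P S ρ t.val.2 * pairP δ P t.val.2 t.val.1 := by
  rw [hρ.2.2 t, edgeInflow, sum_mul]
  refine sum_congr rfl fun s _ => ?_
  split_ifs <;> ring

end IsEdgeStationary

variable {ρ : EdgeState M.δ M.P S → ℝ}

theorem IsEdgeStationary.eq_edgeInflow_mul_fst (hS : ∀ j ∈ S, IsDeadlockPair M.δ j.1 j.2)
    (hρ : IsEdgeStationary M.δ M.P S ρ) (t : EdgeState M.δ M.P S) :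
    ρ t = edgeInflow M.δ M.P S ρ t.val.2 * M.P t.val.2.1 t.val.1 := by
  rw [hρ.eq_edgeInflow_mul, M.pairP_eq_of_deadlock (hS _ t.prop.1)]

theorem sum_edgeState_mul_eq (hS : ∀ j ∈ S, IsDeadlockPair M.δ j.1 j.2) (g : Q × Q → ℝ)
    {f : Q × Q → Q} (hf : ∀ j, f j = j.1 ∨ f j = j.2) :
    ∑ t : EdgeState M.δ M.P S, g t.val.2 * M.P (f t.val.2) t.val.1 =
      ∑ j, if j ∈ S then g j else 0 := by
  rw [sum_edgeState_eq hS (fun e => g e.2 * M.P (f e.2) e.1)]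
  · simp only [← mul_sum, M.sum_one, mul_one]
  · intro j hj a ha
    rcases hf j with h | h <;> rw [h]
    · simp [ha]
    · simp [M.eq_zero_of_deadlock (hS j hj) ha]

theorem IsEdgeStationary.sum_mul_div_eq (hS : ∀ j ∈ S, IsDeadlockPair M.δ j.1 j.2)
    (hρ : IsEdgeStationary M.δ M.P S ρ) :
    ∑ t, ρ t * (M.P t.val.2.2 t.val.1 / M.P t.val.2.1 t.val.1) = ∑ t, ρ t := by
  have hdiv : ∀ t : EdgeState M.δ M.P S, ρ t * (M.P t.val.2.2 t.val.1 / M.P t.val.2.1 t.val.1) =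
      edgeInflow M.δ M.P S ρ t.val.2 * M.P t.val.2.2 t.val.1 := fun t => by
    rw [hρ.eq_edgeInflow_mul_fst hS]
    field_simp [(EdgeState.fst_pos hS t).ne']
  rw [sum_congr rfl fun t _ => hdiv t, sum_congr rfl fun t _ => hρ.eq_edgeInflow_mul_fst hS t]
  rw [sum_edgeState_mul_eq hS _ fun j => Or.inr rfl, sum_edgeState_mul_eq hS _ fun j => Or.inl rfl]

theorem IsEdgeStationary.exists_pos_ne (hS : ∀ j ∈ S, IsDeadlockPair M.δ j.1 j.2)
    (hclosed : ∀ j ∈ S, ∀ a : A, ∀ j' : Q × Q, pairStep M.δ j a = some j' → j' ∈ S)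
    (hρ : IsEdgeStationary M.δ M.P S ρ) :
    ∃ t : EdgeState M.δ M.P S, 0 < ρ t ∧ M.P t.val.2.1 t.val.1 ≠ M.P t.val.2.2 t.val.1 := by
  by_contra! hcon
  set T := {j | j ∈ S ∧ 0 < edgeInflow M.δ M.P S ρ j}
  have hedge : ∀ j ∈ T, ∀ a, 0 < M.P j.1 a →
      ∃ h : j ∈ S ∧ 0 < pairP M.δ M.P j a, 0 < ρ ⟨(a, j), h⟩ := fun j hj a ha => by
    have h : j ∈ S ∧ 0 < pairP M.δ M.P j a :=
      ⟨hj.1, (M.pairP_eq_of_deadlock (hS j hj.1) a).symm ▸ ha⟩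
    exact ⟨h, hρ.eq_edgeInflow_mul_fst hS ⟨(a, j), h⟩ ▸ mul_pos hj.2 ha⟩
  have hP : ∀ j ∈ T, M.P j.1 = M.P j.2 := fun j hj => funext fun a => by
    by_cases ha : 0 < M.P j.1 a
    · obtain ⟨_, ht⟩ := hedge j hj a ha
      exact hcon _ ht
    · have h0 := le_antisymm (not_lt.mp ha) (M.nonneg _ _)
      rw [h0, M.eq_zero_of_deadlock (hS j hj.1) h0]
  have hstep : ∀ j ∈ T, ∀ a, M.P j.1 a ≠ 0 →
      ∃ j' ∈ T, M.δ j.1 a = some j'.1 ∧ M.δ j.2 a = some j'.2 := fun j hj a ha => by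
    obtain ⟨j', hj', h1, h2⟩ := (hS j hj.1).exists_pairStep ((M.zero_iff _ _).not.mp ha)
    obtain ⟨_, ht⟩ := hedge j hj a ((M.nonneg _ _).lt_of_ne' ha)
    exact ⟨j', ⟨hclosed j hj.1 a j' hj', ht.trans_le (hρ.le_edgeInflow hj')⟩, h1, h2⟩
  obtain ⟨t, -, ht⟩ := exists_lt_of_sum_lt (s := univ) (f := 0) (g := ρ) (by simp [hρ.2.1])
  have htT : t.val.2 ∈ T :=
    ⟨t.prop.1, pos_of_mul_pos_left (hρ.eq_edgeInflow_mul_fst hS t ▸ ht) (M.nonneg _ _)⟩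
  obtain ⟨u, hu⟩ := M.nonequiv _ _ (hS _ t.prop.1).1
  exact hu (probWord_eq_of_closed _ _ T hP hstep htT u)

end EdgeMachine

theorem stmt13_general {Q A : Type*} [Fintype Q] [Fintype A] (M : EpsMachine Q A)
    (S : Set (Q × Q)) (hS : IsDeadlockComponent M.δ S)
    (ρ : EdgeState M.δ M.P S → ℝ) (hρ : IsEdgeStationary M.δ M.P S ρ) :
    0 < EMval M.δ M.P S ρ := by
  obtain ⟨-, hdeadlock, hclosed, -⟩ := hS
  exact sum_mul_log_div_pos hρ.1 (EdgeState.fst_pos hdeadlock) (EdgeState.snd_pos hdeadlock)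
    (hρ.sum_mul_div_eq hdeadlock) (hρ.exists_pos_ne hdeadlock hclosed)

/-- Lemma 4: `E_M > 0` for each deadlock component `M` of the pair
semi-machine of a non-exact ε-machine (with `ρ` the equilibrium distribution of the edge
machine of `M`). -/
theorem stmt13 {Q A : Type*} [Fintype Q] [Fintype A] (M : EpsMachine Q A)
    (hne : ¬ IsExact M) (S : Set (Q × Q)) (hS : IsDeadlockComponent M.δ S)
    (ρ : EdgeState M.δ M.P S → ℝ) (hρ : IsEdgeStationary M.δ M.P S ρ) :
    0 < EMval M.δ M.P S ρ :=
  stmt13_general M S hS ρ hρ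
end
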